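/- Assume there exist a measurable function V : 𝒳 → [1,∞), a set C ∈ ℬ and constants λ ∈ (0,1), b ≥ 0 such that (P V)(x) − V(x) ≤ −λ V(x) + b·1_C(x) for every x ∈ 𝒳, and set K = sup_{x∈C} V(x) < ∞. Let τ_C = inf{k ≥ 1 : X_k ∈ C}. Then: (i) for every x ∈ 𝒳, ‖τ_C‖_{ψ_1, P_x} ≤ max( log( V(x)·1_{C^c}(x) + (b(1−λ)^{−1}+K)·1_C(x) )/log 2 , 1 ) · (log(1/(1−λ)))^{−1}; (ii) for every probability measure μ on 𝒳, ‖τ_C‖_{ψ_1, P_μ} ≤ max( log( μ(V) + (b(1−λ)^{−1}+K)·μ(C) )/log 2 , 1 ) · (log(1/(1−λ)))^{−1}, where μ(V) = ∫ V dμ; (iii) sup_{x∈C} ‖τ_C‖_{ψ_1, P_x} ≤ max( log( b(1−λ)^{−1}+K )/log 2 , 1 ) · (log(1/(1−λ)))^{−1}. -/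

import Mathlib

/-!
Let `σ_C` be the hitting time of `C` from time `0`, `L = log (1/(1-λ))` and `β = e^L = (1-λ)⁻¹`.
Off `C` the drift condition reads `β · PV ≤ V`, so `V ≥ 1` is a supersolution of the equation
`h = 1` on `C`, `h = β · Ph` off `C`, whose minimal solution is `x ↦ E_x β^{σ_C}`: by induction on
`n`, `E_x β^{min σ_C n} ≤ V x`, and monotone convergence gives `E_x β^{σ_C} ≤ V x`. Since
`τ_C` is `1 +` the hitting time of the shifted path, the Markov property gives `E_x β^{τ_C} ≤ β · PV(x) ≤ V x + b(1-λ)⁻¹ 1_C(x)`.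
Finally, an exponential moment `E e^{L Y} ≤ A` forces `‖Y‖_{ψ_1} ≤ max (log A / log 2) 1 / L`:
with `m = max (log A / log 2) 1 ≥ 1`, Jensen for the concave map `t ↦ t^{1/m}` gives
`E e^{L Y / m} ≤ A^{1/m} ≤ 2`.
-/

open MeasureTheory ProbabilityTheory Real
open scoped ENNReal

/-- Prepend a point to a trajectory. -/
def prependPath {𝒳 : Type*} (x : 𝒳) (ω : ℕ → 𝒳) : ℕ → 𝒳 :=
  fun n => Nat.casesOn n x fun k => ω k

/-- The first return time `τ_C = inf{k ≥ 1 : X_k ∈ C}`, with values in `[0,∞]`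
(`inf ∅ = ∞`). -/
noncomputable def pathTau1 {𝒳 : Type*} (C : Set 𝒳) (ω : ℕ → 𝒳) : ℝ≥0∞ :=
  sInf {c : ℝ≥0∞ | ∃ j : ℕ, c = j ∧ 1 ≤ j ∧ ω j ∈ C}

/-- The exponential function on `[0,∞]`, with `exp ∞ = ∞`. -/
noncomputable def expE (y : ℝ≥0∞) : ℝ≥0∞ :=
  if y = ⊤ then ⊤ else ENNReal.ofReal (Real.exp y.toReal)

/-- The exponential Orlicz norm `‖Y‖_{ψ_α,Q}` of a `[0,∞]`-valued variable
(with `inf ∅ = ∞`). -/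
noncomputable def psiNormE {Ω : Type*} [MeasurableSpace Ω] (Q : Measure Ω) (α : ℝ)
    (Y : Ω → ℝ≥0∞) : ℝ≥0∞ :=
  sInf {c : ℝ≥0∞ | ∃ r : ℝ, 0 < r ∧ c = ENNReal.ofReal r ∧
    ∫⁻ ω, expE (Y ω ^ α / ENNReal.ofReal (r ^ α)) ∂Q ≤ 2}

lemma expE_top : expE ⊤ = ⊤ := if_pos rfl

lemma expE_of_ne_top {t : ℝ≥0∞} (ht : t ≠ ⊤) : expE t = ENNReal.ofReal (Real.exp t.toReal) :=
  if_neg ht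

lemma expE_eq_exp (t : ℝ≥0∞) : expE t = EReal.exp t := by
  rcases eq_or_ne t ⊤ with rfl | ht
  · simp [expE_top]
  · rw [expE_of_ne_top ht, ← EReal.exp_coe, ← EReal.coe_ennreal_toReal ht]

lemma expE_zero : expE 0 = 1 := by simp [expE_eq_exp]

lemma expE_add (s t : ℝ≥0∞) : expE (s + t) = expE s * expE t := by
  simp only [expE_eq_exp, EReal.coe_ennreal_add, EReal.exp_add]

lemma expE_add_one_mul (t c : ℝ≥0∞) : expE ((t + 1) * c) = expE c * expE (t * c) := by
  rw [add_mul, one_mul, expE_add, mul_comm]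

lemma monotone_expE : Monotone expE := fun s t h => by
  simpa only [expE_eq_exp] using EReal.exp_monotone (EReal.coe_ennreal_le_coe_ennreal_iff.2 h)

lemma one_le_expE (t : ℝ≥0∞) : 1 ≤ expE t := expE_zero ▸ monotone_expE (zero_le : 0 ≤ t)

lemma le_expE (t : ℝ≥0∞) : t ≤ expE t := by
  rcases eq_or_ne t ⊤ with rfl | ht
  · simp [expE_top]
  · rw [expE_of_ne_top ht]
    conv_lhs => rw [← ENNReal.ofReal_toReal ht]
    exact ENNReal.ofReal_le_ofReal ((Real.add_one_le_exp _).trans' (by linarith))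

lemma measurable_expE : Measurable expE :=
  Measurable.ite (measurableSet_singleton ⊤) measurable_const
    (ENNReal.measurable_toReal.exp).ennreal_ofReal

lemma expE_mul_ofReal {θ : ℝ} (hθ : 0 < θ) (t : ℝ≥0∞) :
    expE (t * ENNReal.ofReal θ) = expE t ^ θ := by
  rcases eq_or_ne t ⊤ with rfl | ht
  · rw [ENNReal.top_mul (by simpa using hθ), expE_top, ENNReal.top_rpow_of_pos hθ]
  · rw [expE_of_ne_top ht, expE_of_ne_top (ENNReal.mul_ne_top ht ENNReal.ofReal_ne_top),
      ENNReal.ofReal_rpow_of_nonneg (Real.exp_nonneg _) hθ.le, ← Real.exp_mul,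
      ENNReal.toReal_mul, ENNReal.toReal_ofReal hθ.le]

lemma iSup_expE_min_natCast_mul (t c : ℝ≥0∞) :
    ⨆ n : ℕ, expE (min t n * c) = expE (t * c) := by
  refine le_antisymm (iSup_le fun n => monotone_expE (by gcongr; exact min_le_left _ _)) ?_
  rcases eq_or_ne t ⊤ with rfl | ht
  · rcases eq_or_ne c 0 with rfl | hc
    · simp [expE_zero]
    calc expE (⊤ * c) ≤ ⨆ n : ℕ, (n : ℝ≥0∞) * c := by
          rw [← ENNReal.iSup_mul, ENNReal.iSup_natCast, ENNReal.top_mul hc]; exact le_top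
      _ ≤ ⨆ n : ℕ, expE (min (⊤ : ℝ≥0∞) n * c) := by
          gcongr with n; simpa using le_expE _
  · obtain ⟨n, hn⟩ := ENNReal.exists_nat_gt ht
    exact le_iSup_of_le n (by rw [min_eq_left hn.le])

lemma lintegral_rpow_le_rpow_lintegral {Ω : Type*} [MeasurableSpace Ω] (Q : Measure Ω)
    [IsProbabilityMeasure Q] {f : Ω → ℝ≥0∞} (hf : AEMeasurable f Q) {θ : ℝ}
    (hθ₀ : 0 < θ) (hθ₁ : θ ≤ 1) :
    ∫⁻ ω, f ω ^ θ ∂Q ≤ (∫⁻ ω, f ω ∂Q) ^ θ := by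
  have h := eLpNorm'_le_eLpNorm'_of_exponent_le hθ₀ hθ₁ Q hf.aestronglyMeasurable
  simp only [eLpNorm'_eq_lintegral_enorm, enorm_eq_self, ENNReal.rpow_one, div_one] at h
  calc ∫⁻ ω, f ω ^ θ ∂Q = ((∫⁻ ω, f ω ^ θ ∂Q) ^ (1 / θ)) ^ θ := by
        rw [← ENNReal.rpow_mul, one_div_mul_cancel hθ₀.ne', ENNReal.rpow_one]
    _ ≤ (∫⁻ ω, f ω ∂Q) ^ θ := by gcongr

lemma rpow_inv_max_log_div_log_two_le_two {A : ℝ} (hA : 0 < A) :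
    A ^ (max (Real.log A / Real.log 2) 1)⁻¹ ≤ 2 := by
  have hlog2 : 0 < Real.log 2 := Real.log_pos one_lt_two
  set m := max (Real.log A / Real.log 2) 1
  have hm : 0 < m := lt_max_of_lt_right one_pos
  have hlogA : Real.log A ≤ m * Real.log 2 :=
    (div_le_iff₀ hlog2).1 (le_max_left _ _)
  calc A ^ m⁻¹ = Real.exp (Real.log A * m⁻¹) := Real.rpow_def_of_pos hA _
    _ ≤ Real.exp (Real.log 2) := Real.exp_le_exp.2 ((mul_inv_le_iff₀ hm).2 (by linarith))
    _ = 2 := Real.exp_log two_pos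

lemma psiNormE_one_le_of_lintegral_expE_le {Ω : Type*} [MeasurableSpace Ω] (Q : Measure Ω)
    [IsProbabilityMeasure Q] {Y : Ω → ℝ≥0∞} (hY : AEMeasurable Y Q) {L A : ℝ} (hL : 0 < L)
    (hYA : ∫⁻ ω, expE (Y ω * ENNReal.ofReal L) ∂Q ≤ ENNReal.ofReal A) :
    psiNormE Q 1 Y ≤ ENNReal.ofReal (max (Real.log A / Real.log 2) 1 * L⁻¹) := by
  set m := max (Real.log A / Real.log 2) 1
  have hm : 0 < m := lt_max_of_lt_right one_pos
  have hA : 1 ≤ A := by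
    refine ENNReal.one_le_ofReal.1 (le_trans ?_ hYA)
    calc (1 : ℝ≥0∞) = ∫⁻ _, 1 ∂Q := by simp
      _ ≤ _ := lintegral_mono fun ω => one_le_expE _
  have hscale : ∀ ω, expE (Y ω ^ (1 : ℝ) / ENNReal.ofReal ((m * L⁻¹) ^ (1 : ℝ)))
      = expE (Y ω * ENNReal.ofReal L) ^ m⁻¹ := fun ω => by
    rw [← expE_mul_ofReal (inv_pos.2 hm), ENNReal.rpow_one, Real.rpow_one, div_eq_mul_inv,
      ← ENNReal.ofReal_inv_of_pos (by positivity), mul_assoc, ← ENNReal.ofReal_mul hL.le]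
    congr 3
    field_simp
  refine sInf_le ⟨m * L⁻¹, by positivity, rfl, ?_⟩
  calc ∫⁻ ω, expE (Y ω ^ (1 : ℝ) / ENNReal.ofReal ((m * L⁻¹) ^ (1 : ℝ))) ∂Q
      = ∫⁻ ω, expE (Y ω * ENNReal.ofReal L) ^ m⁻¹ ∂Q := lintegral_congr hscale
    _ ≤ (∫⁻ ω, expE (Y ω * ENNReal.ofReal L) ∂Q) ^ m⁻¹ :=
      lintegral_rpow_le_rpow_lintegral Q
        (measurable_expE.comp_aemeasurable (hY.mul_const _)) (inv_pos.2 hm)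
        (inv_le_one_of_one_le₀ (le_max_right _ _))
    _ ≤ ENNReal.ofReal A ^ m⁻¹ := by gcongr
    _ ≤ 2 := by
      rw [ENNReal.ofReal_rpow_of_pos (by linarith), ← ENNReal.ofReal_ofNat 2]
      exact ENNReal.ofReal_le_ofReal (rpow_inv_max_log_div_log_two_le_two (by linarith))

section Paths

variable {𝒳 : Type*}

noncomputable def hitTime (C : Set 𝒳) (ω : ℕ → 𝒳) : ℝ≥0∞ :=
  sInf {c : ℝ≥0∞ | ∃ j : ℕ, c = j ∧ ω j ∈ C}

open scoped Classical in
lemma hitTime_eq_iInf (C : Set 𝒳) (ω : ℕ → 𝒳) :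
    hitTime C ω = ⨅ j : ℕ, if ω j ∈ C then (j : ℝ≥0∞) else ⊤ := by
  refine le_antisymm (le_iInf fun j => ?_) (le_sInf ?_)
  · split_ifs with hj
    · exact sInf_le ⟨j, rfl, hj⟩
    · exact le_top
  · rintro _ ⟨j, rfl, hj⟩
    exact iInf_le_of_le j (by rw [if_pos hj])

lemma measurable_hitTime [MeasurableSpace 𝒳] {C : Set 𝒳} (hC : MeasurableSet C) :
    Measurable (hitTime C) := by
  simp_rw [funext (hitTime_eq_iInf C)]
  exact Measurable.iInf fun j => Measurable.ite (measurable_pi_apply j hC)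
    measurable_const measurable_const

lemma pathTau1_eq_hitTime_add_one (C : Set 𝒳) (ω : ℕ → 𝒳) :
    pathTau1 C ω = hitTime C (fun k => ω (k + 1)) + 1 := by
  have hset : {c : ℝ≥0∞ | ∃ j : ℕ, c = j ∧ 1 ≤ j ∧ ω j ∈ C}
      = (· + 1) '' {c : ℝ≥0∞ | ∃ j : ℕ, c = j ∧ ω (j + 1) ∈ C} := by
    ext c
    constructor
    · rintro ⟨j, rfl, hj, hjC⟩
      obtain ⟨k, rfl⟩ := Nat.exists_eq_add_of_le' hj
      exact ⟨k, ⟨k, rfl, hjC⟩, by push_cast; rfl⟩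
    · rintro ⟨_, ⟨k, rfl, hkC⟩, rfl⟩
      exact ⟨k + 1, by push_cast; rfl, k.succ_pos, hkC⟩
  rw [pathTau1, hset, sInf_image, hitTime, ENNReal.sInf_add]

lemma measurable_pathTau1 [MeasurableSpace 𝒳] {C : Set 𝒳} (hC : MeasurableSet C) :
    Measurable (pathTau1 C) := by
  simp_rw [funext (pathTau1_eq_hitTime_add_one C)]
  exact ((measurable_hitTime hC).comp
    (measurable_pi_lambda _ fun k => measurable_pi_apply (k + 1))).add_const 1

lemma pathTau1_prependPath (C : Set 𝒳) (x : 𝒳) (ω : ℕ → 𝒳) :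
    pathTau1 C (prependPath x ω) = hitTime C ω + 1 :=
  pathTau1_eq_hitTime_add_one C _

lemma hitTime_prependPath_of_mem {C : Set 𝒳} {x : 𝒳} (hx : x ∈ C) (ω : ℕ → 𝒳) :
    hitTime C (prependPath x ω) = 0 :=
  nonpos_iff_eq_zero.1 (sInf_le ⟨0, by simp, hx⟩)

lemma hitTime_prependPath_of_notMem {C : Set 𝒳} {x : 𝒳} (hx : x ∉ C) (ω : ℕ → 𝒳) :
    hitTime C (prependPath x ω) = hitTime C ω + 1 := by
  rw [← pathTau1_prependPath C x, hitTime, pathTau1]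
  congr 1
  ext c
  refine exists_congr fun j => and_congr_right fun _ => ?_
  rcases j with _ | k
  · exact iff_of_false hx (by simp)
  · simp

lemma measurable_prependPath [MeasurableSpace 𝒳] (x : 𝒳) : Measurable (prependPath x) :=
  measurable_pi_lambda _ fun n => by
    cases n with
    | zero => exact measurable_const
    | succ k => exact measurable_pi_apply k

end Paths

structure IsPathLaw {𝒳 : Type*} [MeasurableSpace 𝒳] (κ : Kernel 𝒳 𝒳)
    (Pa : 𝒳 → Measure (ℕ → 𝒳)) : Prop where
  measurable : Measurable Pa
  eq_bind : ∀ x, Pa x = (κ x).bind fun y => (Pa y).map (prependPath x)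

namespace IsPathLaw

variable {𝒳 : Type*} [MeasurableSpace 𝒳] {κ : Kernel 𝒳 𝒳} {Pa : 𝒳 → Measure (ℕ → 𝒳)}

lemma lintegral_eq (hP : IsPathLaw κ Pa) {f : (ℕ → 𝒳) → ℝ≥0∞} (hf : Measurable f) (x : 𝒳) :
    ∫⁻ ω, f ω ∂Pa x = ∫⁻ y, ∫⁻ ω, f (prependPath x ω) ∂Pa y ∂κ x := by
  have hmap : Measurable fun y => (Pa y).map (prependPath x) :=
    (Measure.measurable_map _ (measurable_prependPath x)).comp hP.measurable
  rw [hP.eq_bind x, Measure.lintegral_bind hmap.aemeasurable hf.aemeasurable]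
  exact lintegral_congr fun y => lintegral_map hf (measurable_prependPath x)

lemma measurable_lintegral (hP : IsPathLaw κ Pa) {f : (ℕ → 𝒳) → ℝ≥0∞} (hf : Measurable f) :
    Measurable fun y => ∫⁻ ω, f ω ∂Pa y :=
  (Measure.measurable_lintegral hf).comp hP.measurable

variable [IsMarkovKernel κ] [∀ x, IsProbabilityMeasure (Pa x)]

lemma lintegral_comp_zero (hP : IsPathLaw κ Pa) {g : 𝒳 → ℝ≥0∞} (hg : Measurable g) (x : 𝒳) :
    ∫⁻ ω, g (ω 0) ∂Pa x = g x := by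
  rw [hP.lintegral_eq (f := fun ω => g (ω 0)) (hg.comp (measurable_pi_apply 0))]
  simp [prependPath]

lemma lintegral_comp_one (hP : IsPathLaw κ Pa) {g : 𝒳 → ℝ≥0∞} (hg : Measurable g) (x : 𝒳) :
    ∫⁻ ω, g (ω 1) ∂Pa x = ∫⁻ y, g y ∂κ x := by
  rw [hP.lintegral_eq (f := fun ω => g (ω 1)) (hg.comp (measurable_pi_apply 1))]
  exact lintegral_congr fun y => hP.lintegral_comp_zero hg y

variable {C : Set 𝒳}

section ExponentialMoments

variable {V : 𝒳 → ℝ≥0∞} {c : ℝ≥0∞}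

lemma lintegral_expE_min_hitTime_le (hP : IsPathLaw κ Pa) (hC : MeasurableSet C)
    (hV : ∀ x, 1 ≤ V x) (hdrift : ∀ x ∉ C, expE c * ∫⁻ y, V y ∂κ x ≤ V x) (n : ℕ) (x : 𝒳) :
    ∫⁻ ω, expE (min (hitTime C ω) n * c) ∂Pa x ≤ V x := by
  induction n generalizing x with
  | zero => simpa [expE_zero] using hV x
  | succ n ih =>
    have hmeas : ∀ m : ℕ, Measurable fun ω => expE (min (hitTime C ω) m * c) := fun m =>
      measurable_expE.comp (((measurable_hitTime hC).min measurable_const).mul_const c)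
    rw [hP.lintegral_eq (hmeas (n + 1))]
    by_cases hx : x ∈ C
    · simpa [hitTime_prependPath_of_mem hx, expE_zero] using hV x
    · calc ∫⁻ y, ∫⁻ ω, expE (min (hitTime C (prependPath x ω)) ↑(n + 1) * c) ∂Pa y ∂κ x
          = expE c * ∫⁻ y, ∫⁻ ω, expE (min (hitTime C ω) n * c) ∂Pa y ∂κ x := by
            simp_rw [hitTime_prependPath_of_notMem hx, Nat.cast_succ, min_add_add_right,
              expE_add_one_mul, lintegral_const_mul _ (hmeas n)]
            exact lintegral_const_mul _ (hP.measurable_lintegral (hmeas n))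
        _ ≤ expE c * ∫⁻ y, V y ∂κ x := by gcongr with y; exact ih y
        _ ≤ V x := hdrift x hx

lemma lintegral_expE_hitTime_le (hP : IsPathLaw κ Pa) (hC : MeasurableSet C)
    (hV : ∀ x, 1 ≤ V x) (hdrift : ∀ x ∉ C, expE c * ∫⁻ y, V y ∂κ x ≤ V x) (x : 𝒳) :
    ∫⁻ ω, expE (hitTime C ω * c) ∂Pa x ≤ V x := by
  rw [lintegral_congr fun ω => (iSup_expE_min_natCast_mul (hitTime C ω) c).symm, lintegral_iSup]
  · exact iSup_le fun n => hP.lintegral_expE_min_hitTime_le hC hV hdrift n x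
  · exact fun n => measurable_expE.comp (((measurable_hitTime hC).min measurable_const).mul_const c)
  · exact fun m n hmn ω => monotone_expE (by gcongr)

lemma lintegral_expE_pathTau1_le (hP : IsPathLaw κ Pa) (hC : MeasurableSet C)
    (hV : ∀ x, 1 ≤ V x) (hdrift : ∀ x ∉ C, expE c * ∫⁻ y, V y ∂κ x ≤ V x) (x : 𝒳) :
    ∫⁻ ω, expE (pathTau1 C ω * c) ∂Pa x ≤ expE c * ∫⁻ y, V y ∂κ x := by
  have hmeas : Measurable fun ω => expE (hitTime C ω * c) :=
    measurable_expE.comp ((measurable_hitTime hC).mul_const c)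
  rw [hP.lintegral_eq (f := fun ω => expE (pathTau1 C ω * c))
    (measurable_expE.comp ((measurable_pathTau1 hC).mul_const c))]
  simp_rw [pathTau1_prependPath, expE_add_one_mul, lintegral_const_mul _ hmeas]
  rw [lintegral_const_mul _ (hP.measurable_lintegral hmeas)]
  gcongr with y
  exact hP.lintegral_expE_hitTime_le hC hV hdrift y

end ExponentialMoments

lemma lintegral_expE_pathTau1_le_of_geometric_drift (hP : IsPathLaw κ Pa)
    (hC : MeasurableSet C) {V : 𝒳 → ℝ} (hV : ∀ x, 1 ≤ V x) {lam b K : ℝ}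
    (hlam : lam ∈ Set.Ioo (0 : ℝ) 1) (hK : ∀ x ∈ C, V x ≤ K)
    (hdrift : ∀ x, ∫⁻ y, ENNReal.ofReal (V y) ∂κ x
      ≤ ENNReal.ofReal (V x - lam * V x + b * C.indicator (fun _ => 1) x)) (x : 𝒳) :
    ∫⁻ ω, expE (pathTau1 C ω * ENNReal.ofReal (Real.log (1 / (1 - lam)))) ∂Pa x
      ≤ ENNReal.ofReal (Cᶜ.indicator V x + (b * (1 - lam)⁻¹ + K) * C.indicator (fun _ => 1) x) := by
  obtain ⟨hlam₀, hlam₁⟩ := hlam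
  set c := ENNReal.ofReal (Real.log (1 / (1 - lam)))
  have hexp : expE c = ENNReal.ofReal (1 - lam)⁻¹ := by
    have hlog : 0 ≤ Real.log (1 / (1 - lam)) :=
      Real.log_nonneg (one_le_one_div (by linarith) (by linarith))
    rw [expE_of_ne_top ENNReal.ofReal_ne_top, ENNReal.toReal_ofReal hlog,
      Real.exp_log (by positivity), one_div]
  have hscale : ∀ x, expE c * ENNReal.ofReal (V x - lam * V x + b * C.indicator (fun _ => 1) x)
      = ENNReal.ofReal (V x + b * (1 - lam)⁻¹ * C.indicator (fun _ => 1) x) := fun x => by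
    rw [hexp, ← ENNReal.ofReal_mul (inv_nonneg.2 (by linarith))]
    congr 1
    field_simp
  have hdrift' : ∀ x, expE c * ∫⁻ y, ENNReal.ofReal (V y) ∂κ x
      ≤ ENNReal.ofReal (V x + b * (1 - lam)⁻¹ * C.indicator (fun _ => 1) x) := fun x =>
    hscale x ▸ mul_le_mul_right (hdrift x) _
  calc _ ≤ expE c * ∫⁻ y, ENNReal.ofReal (V y) ∂κ x :=
        hP.lintegral_expE_pathTau1_le hC (fun x => ENNReal.one_le_ofReal.2 (hV x))
          (fun x hx => by simpa [hx] using hdrift' x) x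
    _ ≤ ENNReal.ofReal (V x + b * (1 - lam)⁻¹ * C.indicator (fun _ => 1) x) := hdrift' x
    _ ≤ _ := by
        refine ENNReal.ofReal_le_ofReal ?_
        by_cases hx : x ∈ C
        · simpa [hx, add_comm] using hK x hx
        · simp [hx]

end IsPathLaw

lemma lintegral_ofReal_indicator_add_le {𝒳 : Type*} [MeasurableSpace 𝒳] {μ : Measure 𝒳}
    [IsFiniteMeasure μ] {C : Set 𝒳} (hC : MeasurableSet C) {V : 𝒳 → ℝ}
    (hVμ : ∫⁻ x, ENNReal.ofReal (V x) ∂μ ≠ ⊤) {M : ℝ} (hM : C.Nonempty → 0 ≤ M) :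
    ∫⁻ x, ENNReal.ofReal (Cᶜ.indicator V x + M * C.indicator (fun _ => 1) x) ∂μ
      ≤ ENNReal.ofReal ((∫⁻ x, ENNReal.ofReal (V x) ∂μ).toReal + M * (μ C).toReal) := by
  have hMC : 0 ≤ M * (μ C).toReal := by
    rcases C.eq_empty_or_nonempty with rfl | hne
    · simp
    · exact mul_nonneg (hM hne) ENNReal.toReal_nonneg
  calc ∫⁻ x, ENNReal.ofReal (Cᶜ.indicator V x + M * C.indicator (fun _ => 1) x) ∂μ
      ≤ ∫⁻ x, ENNReal.ofReal (V x) + C.indicator (fun _ => ENNReal.ofReal M) x ∂μ := by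
        refine lintegral_mono fun x => ?_
        by_cases hx : x ∈ C <;> simp [hx]
    _ = (∫⁻ x, ENNReal.ofReal (V x) ∂μ) + ENNReal.ofReal M * μ C := by
        rw [lintegral_add_right _ (measurable_const.indicator hC), lintegral_indicator_const hC]
    _ = _ := by
        rw [ENNReal.ofReal_add ENNReal.toReal_nonneg hMC, ENNReal.ofReal_toReal hVμ,
          ENNReal.ofReal_mul' ENNReal.toReal_nonneg, ENNReal.ofReal_toReal (measure_ne_top μ C)]

/-- Geometric drift condition `PV − V ≤ −λV + b 1_C`, `V ≥ 1`, `K = sup_{x∈C} V(x) < ∞`,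
implies `ψ_1` bounds on the return time `τ_C = inf{k ≥ 1 : X_k ∈ C}`:
(i) `‖τ_C‖_{ψ_1,P_x} ≤ max(log(V(x)1_{Cᶜ}(x)+(b(1−λ)^{−1}+K)1_C(x))/log 2, 1)/log(1/(1−λ))`;
(ii) for every initial probability distribution `μ`,
`‖τ_C‖_{ψ_1,P_μ} ≤ max(log(μ(V)+(b(1−λ)^{−1}+K)μ(C))/log 2, 1)/log(1/(1−λ))`
(the right-hand side being `∞` when `μ(V) = ∞`);
(iii) `sup_{x∈C} ‖τ_C‖_{ψ_1,P_x} ≤ max(log(b(1−λ)^{−1}+K)/log 2, 1)/log(1/(1−λ))`.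
Here `Pa x` is the Ionescu–Tulcea path measure of the canonical chain started at `x`,
characterized by the recursion `hPa`, and `P_μ = μ.bind Pa`. -/
theorem stmt_19 {𝒳 : Type*} [MeasurableSpace 𝒳]
    (κ : Kernel 𝒳 𝒳) [IsMarkovKernel κ]
    (Pa : 𝒳 → Measure (ℕ → 𝒳)) [∀ x, IsProbabilityMeasure (Pa x)]
    (hPa_meas : Measurable Pa)
    (hPa : ∀ x, Pa x = (κ x).bind fun y => (Pa y).map (prependPath x))
    (V : 𝒳 → ℝ) (hVm : Measurable V) (hV1 : ∀ x, 1 ≤ V x)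
    (C : Set 𝒳) (hC : MeasurableSet C)
    (lam b K : ℝ) (hlam : lam ∈ Set.Ioo (0 : ℝ) 1) (hb : 0 ≤ b)
    (hK : ∀ x ∈ C, V x ≤ K)
    (hdrift : ∀ x, ∫⁻ ω, ENNReal.ofReal (V (ω 1)) ∂(Pa x)
        ≤ ENNReal.ofReal (V x - lam * V x + b * Set.indicator C (fun _ => 1) x)) :
    (∀ x : 𝒳, psiNormE (Pa x) 1 (pathTau1 C)
        ≤ ENNReal.ofReal (max
            (Real.log (Set.indicator Cᶜ V x +
                (b * (1 - lam)⁻¹ + K) * Set.indicator C (fun _ => 1) x) / Real.log 2) 1 *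
            (Real.log (1 / (1 - lam)))⁻¹)) ∧
    (∀ μ : Measure 𝒳, IsProbabilityMeasure μ →
      psiNormE (μ.bind Pa) 1 (pathTau1 C)
        ≤ (if (∫⁻ x, ENNReal.ofReal (V x) ∂μ) = ⊤ then ⊤ else
            ENNReal.ofReal (max
              (Real.log ((∫⁻ x, ENNReal.ofReal (V x) ∂μ).toReal +
                  (b * (1 - lam)⁻¹ + K) * (μ C).toReal) / Real.log 2) 1 *
              (Real.log (1 / (1 - lam)))⁻¹))) ∧
    ((⨆ x ∈ C, psiNormE (Pa x) 1 (pathTau1 C))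
        ≤ ENNReal.ofReal (max (Real.log (b * (1 - lam)⁻¹ + K) / Real.log 2) 1 *
            (Real.log (1 / (1 - lam)))⁻¹)) := by
  have hP : IsPathLaw κ Pa := ⟨hPa_meas, hPa⟩
  have hL : 0 < Real.log (1 / (1 - lam)) :=
    Real.log_pos (one_lt_one_div (by linarith [hlam.2]) (by linarith [hlam.1]))
  set c := ENNReal.ofReal (Real.log (1 / (1 - lam)))
  have hmoment := hP.lintegral_expE_pathTau1_le_of_geometric_drift hC hV1 hlam hK
    (fun x => hP.lintegral_comp_one hVm.ennreal_ofReal x ▸ hdrift x)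
  have hψ := fun x => psiNormE_one_le_of_lintegral_expE_le (Pa x)
    (measurable_pathTau1 hC).aemeasurable hL (hmoment x)
  refine ⟨hψ, fun μ hμ => ?_, iSup₂_le fun x hx => by simpa [hx] using hψ x⟩
  split_ifs with hVμ
  · exact le_top
  have : IsProbabilityMeasure (μ.bind Pa) :=
    isProbabilityMeasure_bind hPa_meas.aemeasurable (ae_of_all _ inferInstance)
  refine psiNormE_one_le_of_lintegral_expE_le _ (measurable_pathTau1 hC).aemeasurable hL ?_
  have hM : C.Nonempty → 0 ≤ b * (1 - lam)⁻¹ + K := fun ⟨x₀, hx₀⟩ =>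
    add_nonneg (mul_nonneg hb (inv_nonneg.2 (by linarith [hlam.2])))
      (by linarith [hK x₀ hx₀, hV1 x₀])
  rw [Measure.lintegral_bind hPa_meas.aemeasurable (f := fun ω => expE (pathTau1 C ω * c))
    (measurable_expE.comp ((measurable_pathTau1 hC).mul_const _)).aemeasurable]
  exact (lintegral_mono hmoment).trans (lintegral_ofReal_indicator_add_le hC hVμ hM)
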